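/- Assume hypotheses (H'). Let (λ,u) be a nontrivial solution of (P) with λ>0 such that u≥0 on [0,1] or u≤0 on [0,1]. Suppose v∈C([0,1],ℝ) is differentiable on (0,1], v(1)=0, v'(r)→0 as r→0⁺, and the function r↦r^{N−1}|u'(r)|^{p−2}v'(r) extends to a C^1 function w on [0,1] satisfying −w'(r) = p* λ r^{N−1} ∂_2f(r,u(r)) v(r) for 0<r<1. Then v≡0 on [0,1]. -/

import Mathlib

open Set MeasureTheory Filter Topology intervalIntegral

noncomputable section

/-- `phi p ξ = |ξ|^(p-2) ξ`, the function `φ_p`. -/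
def phi (p ξ : ℝ) : ℝ := |ξ| ^ (p - 2) * ξ

/-- The (one-sided at endpoints) derivative of a function on `[0,1]`. -/
def deriv01 (u : ℝ → ℝ) (r : ℝ) : ℝ := derivWithin u (Set.Icc 0 1) r

/-- `u ∈ C^1([0,1],ℝ)`. -/
def C1on01 (u : ℝ → ℝ) : Prop :=
  (∀ r ∈ Set.Icc (0:ℝ) 1, DifferentiableWithinAt ℝ u (Set.Icc 0 1) r) ∧
  ContinuousOn (deriv01 u) (Set.Icc 0 1)

/-- `J(h)(s) = ∫_0^s (t/s)^(N-1) h(t) dt`, with `J(h)(0) = 0`. -/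
def Jmap (N : ℕ) (h : ℝ → ℝ) (s : ℝ) : ℝ :=
  if s = 0 then 0 else ∫ t in (0:ℝ)..s, (t / s) ^ (N - 1) * h t

/-- `S_p(h)(r) = ∫_r^1 φ_{p'}(J(h)(s)) ds` where `p' = p/(p-1)`. -/
def Sp (p : ℝ) (N : ℕ) (h : ℝ → ℝ) (r : ℝ) : ℝ :=
  ∫ s in r..(1:ℝ), phi (p / (p - 1)) (Jmap N h s)

/-- The sup norm over `[0,1]`. -/
def norm0 (h : ℝ → ℝ) : ℝ := sSup ((fun t => |h t|) '' Set.Icc 0 1)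

/-- `u` is not identically zero on `[0,1]`. -/
def Nontriv01 (u : ℝ → ℝ) : Prop := ∃ r ∈ Set.Icc (0:ℝ) 1, u r ≠ 0

/-- `(lam, u)` is a solution of problem (P):
`-(r^(N-1) φ_p(u'))' = lam r^(N-1) f(r, u(r))` on `(0,1)`, `u'(0) = u(1) = 0`. -/
def IsSolutionP (p : ℝ) (N : ℕ) (f : ℝ → ℝ → ℝ) (lam : ℝ) (u : ℝ → ℝ) : Prop :=
  C1on01 u ∧ C1on01 (fun r => phi p (deriv01 u r)) ∧
  (∀ r ∈ Set.Ioo (0:ℝ) 1,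
      HasDerivAt (fun s => s ^ (N - 1) * phi p (deriv01 u s))
        (-(lam * r ^ (N - 1) * f r (u r))) r) ∧
  deriv01 u 0 = 0 ∧ u 1 = 0

/-- `(lam, v)` is a principal eigenpair for the weight `w`. -/
def IsPrincipalEigenpair (p : ℝ) (N : ℕ) (w : ℝ → ℝ) (lam : ℝ) (v : ℝ → ℝ) : Prop :=
  0 < lam ∧ C1on01 v ∧ C1on01 (fun r => phi p (deriv01 v r)) ∧
  (∀ r ∈ Set.Ico (0:ℝ) 1, 0 < v r) ∧
  (∀ r ∈ Set.Ioo (0:ℝ) 1,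
      HasDerivAt (fun s => s ^ (N - 1) * phi p (deriv01 v s))
        (-(lam * r ^ (N - 1) * w r * phi p (v r))) r) ∧
  deriv01 v 0 = 0 ∧ v 1 = 0

/-- Hypotheses (H') of the paper: (H1), (H2')–(H5'), (H6). -/
structure HypH' (p : ℝ) (N : ℕ) (f f₂ : ℝ → ℝ → ℝ) (f0 finf : ℝ → ℝ) : Prop where
  hp : 2 < p
  hN : 1 ≤ N
  hf_cont : ContinuousOn (fun q : ℝ × ℝ => f q.1 q.2) (Set.Icc 0 1 ×ˢ Set.univ)
  hf_deriv : ∀ r ∈ Set.Icc (0:ℝ) 1, ∀ ξ : ℝ, HasDerivAt (fun t => f r t) (f₂ r ξ) ξ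
  hf₂_cont : ContinuousOn (fun q : ℝ × ℝ => f₂ q.1 q.2) (Set.Icc 0 1 ×ˢ Set.univ)
  hH2 : ∀ r ∈ Set.Icc (0:ℝ) 1, ∀ ξ : ℝ, ξ ≠ 0 → 0 < f r ξ * ξ
  hf_zero : ∀ r ∈ Set.Icc (0:ℝ) 1, f r 0 = 0
  hH3p : ∀ r ∈ Set.Icc (0:ℝ) 1, ∀ ξ : ℝ, 0 ≤ ξ → f₂ r ξ * ξ ≤ (p - 1) * f r ξ
  hH3m : ∀ r ∈ Set.Icc (0:ℝ) 1, ∀ ξ : ℝ, ξ ≤ 0 → (p - 1) * f r ξ ≤ f₂ r ξ * ξ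
  hH3s : ∃ δ > 0, ∃ ε > 0, ∀ r ∈ Set.Ioc (1 - δ) 1, ∀ ξ : ℝ, ξ ≠ 0 → |ξ| < ε →
      (0 < ξ → f₂ r ξ * ξ < (p - 1) * f r ξ) ∧ (ξ < 0 → (p - 1) * f r ξ < f₂ r ξ * ξ)
  hf0_cont : ContinuousOn f0 (Set.Icc 0 1)
  hfinf_cont : ContinuousOn finf (Set.Icc 0 1)
  hH4a : ∀ e > 0, ∃ d > 0, ∀ ξ : ℝ, ξ ≠ 0 → |ξ| < d → ∀ r ∈ Set.Icc (0:ℝ) 1,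
      |f r ξ / phi p ξ - f0 r| < e
  hH4b : ∀ e > 0, ∃ d > 0, ∀ ξ : ℝ, ξ ≠ 0 → |ξ| < d → ∀ r ∈ Set.Icc (0:ℝ) 1,
      |f₂ r ξ / |ξ| ^ (p - 2) - (p - 1) * f0 r| < e
  hH5 : ∀ e > 0, ∃ M : ℝ, ∀ ξ : ℝ, M ≤ |ξ| → ∀ r ∈ Set.Icc (0:ℝ) 1,
      |f r ξ / phi p ξ - finf r| < e
  hH6 : (∀ r ∈ Set.Icc (0:ℝ) 1, 0 < finf r) ∨ (N = 1 ∧ ∀ r ∈ Set.Icc (0:ℝ) 1, finf r = 0)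

/-- `u` is sign-definite on `[0,1]`: everywhere `≥ 0` or everywhere `≤ 0`. -/
def SignDef (u : ℝ → ℝ) : Prop :=
  (∀ r ∈ Set.Icc (0:ℝ) 1, 0 ≤ u r) ∨ (∀ r ∈ Set.Icc (0:ℝ) 1, u r ≤ 0)

section Helpers

open Set Filter Topology

lemma uD01 : UniqueDiffOn ℝ (Set.Icc (0:ℝ) 1) := uniqueDiffOn_Icc one_pos

lemma phi_zero (p : ℝ) : phi p 0 = 0 := by simp [phi]

lemma phi_pos {p ξ : ℝ} (h : 0 < ξ) : 0 < phi p ξ :=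
  mul_pos (Real.rpow_pos_of_pos (abs_pos.mpr h.ne') _) h

lemma nonpos_of_phi {p ξ : ℝ} (h : phi p ξ ≤ 0) : ξ ≤ 0 := by
  by_contra hc
  push_neg at hc
  exact absurd h (not_le.mpr (phi_pos hc))

lemma neg_of_phi {p ξ : ℝ} (h : phi p ξ < 0) : ξ < 0 := by
  rcases lt_trichotomy ξ 0 with h1 | h1 | h1
  · exact h1
  · rw [h1, phi_zero] at h; exact absurd h (lt_irrefl 0)
  · exact absurd h (not_lt.mpr (phi_pos h1).le)

lemma phi_neg_arg (p ξ : ℝ) : phi p (-ξ) = -phi p ξ := by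
  unfold phi; rw [abs_neg]; ring

lemma C1cont {u : ℝ → ℝ} (h : C1on01 u) : ContinuousOn u (Set.Icc 0 1) :=
  fun r hr => (h.1 r hr).continuousWithinAt

lemma hasDerivAt_io {u : ℝ → ℝ} {r : ℝ} (h : DifferentiableWithinAt ℝ u (Set.Icc 0 1) r)
    (hr : r ∈ Set.Ioo (0:ℝ) 1) : HasDerivAt u (deriv01 u r) r := by
  have hm : Set.Icc (0:ℝ) 1 ∈ 𝓝 r := Icc_mem_nhds hr.1 hr.2
  have hd := h.differentiableAt hm
  rw [deriv01, derivWithin_of_mem_nhds hm]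
  exact hd.hasDerivAt

lemma deriv01_neg (v : ℝ → ℝ) {r : ℝ} (hr : r ∈ Set.Icc (0:ℝ) 1) :
    deriv01 (fun x => -v x) r = -deriv01 v r := derivWithin.neg

lemma C1neg {u : ℝ → ℝ} (h : C1on01 u) : C1on01 (fun r => -u r) := by
  refine ⟨fun r hr => (h.1 r hr).neg, ?_⟩
  exact (h.2.neg).congr fun r hr => deriv01_neg u hr

lemma C1congr {g h : ℝ → ℝ} (heq : ∀ r ∈ Set.Icc (0:ℝ) 1, g r = h r) (hh : C1on01 h) :
    C1on01 g := by
  refine ⟨fun r hr => (hh.1 r hr).congr (fun y hy => heq y hy) (heq r hr), ?_⟩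
  exact hh.2.congr fun r hr => derivWithin_congr (fun y hy => heq y hy) (heq r hr)

lemma deriv_nonneg_right {f : ℝ → ℝ} {d a b : ℝ} (hab : a < b) (hd : HasDerivAt f d a)
    (h0 : f a = 0) (hpos : ∀ x ∈ Set.Ioo a b, 0 ≤ f x) : 0 ≤ d := by
  have h1 : Tendsto (slope f a) (𝓝[Set.Ioi a \ {a}] a) (𝓝 d) :=
    hasDerivWithinAt_iff_tendsto_slope.mp hd.hasDerivWithinAt
  rw [Set.diff_singleton_eq_self (by simp)] at h1
  refine ge_of_tendsto h1 ?_
  filter_upwards [Ioo_mem_nhdsGT hab] with x hx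
  rw [slope_def_field, h0, sub_zero]
  exact div_nonneg (hpos x hx) (by linarith [hx.1])

lemma deriv_nonpos_left {f : ℝ → ℝ} {d a b : ℝ} (hab : a < b) (hd : HasDerivAt f d b)
    (h0 : f b = 0) (hpos : ∀ x ∈ Set.Ioo a b, 0 ≤ f x) : d ≤ 0 := by
  have h1 : Tendsto (slope f b) (𝓝[Set.Iio b \ {b}] b) (𝓝 d) :=
    hasDerivWithinAt_iff_tendsto_slope.mp hd.hasDerivWithinAt
  rw [Set.diff_singleton_eq_self (by simp)] at h1
  refine le_of_tendsto h1 ?_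
  filter_upwards [Ioo_mem_nhdsLT hab] with x hx
  rw [slope_def_field, h0, sub_zero]
  exact div_nonpos_of_nonneg_of_nonpos (hpos x hx) (by linarith [hx.2])

lemma const_of_deriv0 {f : ℝ → ℝ} {a b : ℝ} (hab : a < b)
    (hc : ContinuousOn f (Set.Icc a b)) (hd : ∀ x ∈ Set.Ioo a b, HasDerivAt f 0 x) :
    ∀ x ∈ Set.Icc a b, f x = f b := by
  have hdif : DifferentiableOn ℝ f (interior (Set.Icc a b)) := by
    rw [interior_Icc]
    exact fun x hx => (hd x hx).differentiableAt.differentiableWithinAt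
  have h1 : MonotoneOn f (Set.Icc a b) := by
    refine monotoneOn_of_deriv_nonneg (convex_Icc a b) hc hdif fun x hx => ?_
    rw [interior_Icc] at hx; rw [(hd x hx).deriv]
  have h2 : AntitoneOn f (Set.Icc a b) := by
    refine antitoneOn_of_deriv_nonpos (convex_Icc a b) hc hdif fun x hx => ?_
    rw [interior_Icc] at hx; rw [(hd x hx).deriv]
  intro x hx
  have hbm : b ∈ Set.Icc a b := ⟨hab.le, le_rfl⟩
  exact le_antisymm (h1 hx hbm hx.2) (h2 hx hbm hx.2)

end Helpers
section Key

open Set Filter Topology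

lemma key_lemma (p : ℝ) (hp : 2 < p) (N : ℕ) (F F₂ : ℝ → ℝ) (lam : ℝ) (hlam : 0 < lam)
    (u : ℝ → ℝ) (hu1 : C1on01 u) (hu2 : C1on01 (fun r => phi p (deriv01 u r)))
    (hode : ∀ r ∈ Set.Ioo (0:ℝ) 1,
      HasDerivAt (fun s => s ^ (N - 1) * phi p (deriv01 u s)) (-(lam * r ^ (N - 1) * F r)) r)
    (hu'0 : deriv01 u 0 = 0) (hu10 : u 1 = 0) (hnt : Nontriv01 u)
    (hupos : ∀ r ∈ Set.Icc (0:ℝ) 1, 0 ≤ u r)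
    (hF0 : ∀ r ∈ Set.Icc (0:ℝ) 1, u r = 0 → F r = 0)
    (hFpos : ∀ r ∈ Set.Icc (0:ℝ) 1, 0 < u r → 0 < F r)
    (hth : ∀ r ∈ Set.Icc (0:ℝ) 1, F₂ r * u r ≤ (p - 1) * F r)
    (hths : ∃ δ > (0:ℝ), ∃ ε > (0:ℝ), ∀ r ∈ Set.Ioc (1 - δ) 1, 0 < u r → u r < ε →
      F₂ r * u r < (p - 1) * F r)
    (v : ℝ → ℝ) (hv_cont : ContinuousOn v (Set.Icc 0 1))
    (hv_diff : ∀ r ∈ Set.Ioc (0:ℝ) 1, DifferentiableWithinAt ℝ v (Set.Icc 0 1) r)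
    (hv1 : v 1 = 0)
    (hv0 : Filter.Tendsto (fun r => deriv01 v r) (nhdsWithin 0 (Set.Ioi 0)) (nhds 0))
    (w : ℝ → ℝ) (hw : C1on01 w)
    (hw_agree : ∀ r ∈ Set.Ioc (0:ℝ) 1,
      w r = r ^ (N - 1) * |deriv01 u r| ^ (p - 2) * deriv01 v r)
    (hw_eq : ∀ r ∈ Set.Ioo (0:ℝ) 1,
      HasDerivAt w (-((1 / (p - 1)) * lam * r ^ (N - 1) * F₂ r * v r)) r)
    (r0 : ℝ) (hr0 : r0 ∈ Set.Icc (0:ℝ) 1) (hvp : 0 < v r0) : False := by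
  have hp1 : (0:ℝ) < p - 1 := by linarith
  have hp2 : (0:ℝ) < p - 2 := by linarith
  set G : ℝ → ℝ := fun s => s ^ (N - 1) * phi p (deriv01 u s) with hGdef
  have hG_cont : ContinuousOn G (Set.Icc 0 1) :=
    (continuous_pow (N - 1)).continuousOn.mul (C1cont hu2)
  have hG0 : G 0 = 0 := by
    simp only [hGdef, hu'0, phi_zero, mul_zero]
  have hFnn : ∀ r ∈ Set.Icc (0:ℝ) 1, 0 ≤ F r := by
    intro r hr
    rcases (hupos r hr).eq_or_lt with h | h
    · exact (hF0 r hr h.symm).ge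
    · exact (hFpos r hr h).le
  -- G is antitone
  have hGanti : AntitoneOn G (Set.Icc 0 1) := by
    refine antitoneOn_of_deriv_nonpos (convex_Icc 0 1) hG_cont ?_ ?_
    · rw [interior_Icc]
      exact fun x hx => (hode x hx).differentiableAt.differentiableWithinAt
    · rw [interior_Icc]
      intro x hx
      rw [(hode x hx).deriv]
      have h1 : 0 ≤ lam * x ^ (N - 1) * F x :=
        mul_nonneg (mul_nonneg hlam.le (pow_nonneg hx.1.le _))
          (hFnn x (Ioo_subset_Icc_self hx))
      linarith
  have hGle : ∀ r ∈ Set.Icc (0:ℝ) 1, G r ≤ 0 := by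
    intro r hr
    have := hGanti ⟨le_refl 0, zero_le_one⟩ hr hr.1
    rwa [hG0] at this
  have hu'le : ∀ r ∈ Set.Ioo (0:ℝ) 1, deriv01 u r ≤ 0 := by
    intro r hr
    have h1 := hGle r (Ioo_subset_Icc_self hr)
    simp only [hGdef] at h1
    have h2 : (0:ℝ) < r ^ (N - 1) := pow_pos hr.1 _
    have h3 : phi p (deriv01 u r) ≤ 0 := by nlinarith
    exact nonpos_of_phi h3
  have hu_anti : AntitoneOn u (Set.Icc 0 1) := by
    refine antitoneOn_of_deriv_nonpos (convex_Icc 0 1) (C1cont hu1) ?_ ?_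
    · rw [interior_Icc]
      intro x hx
      exact (hasDerivAt_io (hu1.1 x (Ioo_subset_Icc_self hx)) hx).differentiableAt.differentiableWithinAt
    · rw [interior_Icc]
      intro x hx
      rw [(hasDerivAt_io (hu1.1 x (Ioo_subset_Icc_self hx)) hx).deriv]
      exact hu'le x hx
  have hu0pos : 0 < u 0 := by
    rcases (hupos 0 ⟨le_refl 0, zero_le_one⟩).eq_or_lt with h | h
    · exfalso
      obtain ⟨r', hr', hne⟩ := hnt
      refine hne (le_antisymm ?_ (hupos r' hr'))
      have := hu_anti ⟨le_refl 0, zero_le_one⟩ hr' hr'.1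
      linarith
    · exact h
  -- u > 0 on [0,1)
  have hupos1 : ∀ x ∈ Set.Ico (0:ℝ) 1, 0 < u x := by
    set Z : Set ℝ := {r | r ∈ Set.Icc (0:ℝ) 1 ∧ u r = 0} with hZdef
    have hZc : IsClosed Z := by
      have := (C1cont hu1).preimage_isClosed_of_isClosed isClosed_Icc
        (isClosed_singleton (x := (0:ℝ)))
      exact this
    have hZne : (1:ℝ) ∈ Z := ⟨⟨zero_le_one, le_refl 1⟩, hu10⟩
    have hZbdd : BddBelow Z := ⟨0, fun x hx => hx.1.1⟩
    set r₂ := sInf Z with hr₂def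
    have hr₂mem : r₂ ∈ Z := hZc.csInf_mem ⟨1, hZne⟩ hZbdd
    have hr₂pos : 0 < r₂ := by
      rcases (hr₂mem.1.1).eq_or_lt with h | h
      · exfalso; rw [← h] at hr₂mem; exact hu0pos.ne' hr₂mem.2
      · exact h
    have hu_pos_lt : ∀ x ∈ Set.Icc (0:ℝ) 1, x < r₂ → 0 < u x := by
      intro x hx hxr
      rcases (hupos x hx).eq_or_lt with h | h
      · exfalso
        have : x ∈ Z := ⟨hx, h.symm⟩
        exact absurd (csInf_le hZbdd this) (not_le.mpr hxr)
      · exact h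
    have hr₂1 : r₂ = 1 := by
      by_contra hne
      have hr₂lt : r₂ < 1 := lt_of_le_of_ne hr₂mem.1.2 hne
      -- G strictly antitone on [0, r₂]
      have hGs : StrictAntiOn G (Set.Icc 0 r₂) := by
        refine strictAntiOn_of_deriv_neg (convex_Icc 0 r₂)
          (hG_cont.mono (Set.Icc_subset_Icc le_rfl hr₂mem.1.2)) ?_
        rw [interior_Icc]
        intro x hx
        have hx1 : x ∈ Set.Ioo (0:ℝ) 1 := ⟨hx.1, lt_of_lt_of_le hx.2 hr₂mem.1.2⟩
        rw [(hode x hx1).deriv]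
        have hFx : 0 < F x :=
          hFpos x (Ioo_subset_Icc_self hx1) (hu_pos_lt x (Ioo_subset_Icc_self hx1) hx.2)
        have : 0 < lam * x ^ (N - 1) * F x :=
          mul_pos (mul_pos hlam (pow_pos hx.1 _)) hFx
        linarith
      have hGr₂ : G r₂ < 0 := by
        have := hGs ⟨le_refl 0, hr₂pos.le⟩ ⟨hr₂pos.le, le_refl r₂⟩ hr₂pos
        rwa [hG0] at this
      set x₃ := (r₂ + 1) / 2 with hx₃def
      have hx₃a : r₂ < x₃ := by rw [hx₃def]; linarith
      have hx₃b : x₃ < 1 := by rw [hx₃def]; linarith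
      have hx₃pos : 0 < x₃ := lt_trans hr₂pos hx₃a
      have huz : ∀ y ∈ Set.Ioo r₂ 1, u y = 0 := by
        intro y hy
        have h1 := hu_anti hr₂mem.1 ⟨le_trans hr₂pos.le hy.1.le, hy.2.le⟩ hy.1.le
        rw [hr₂mem.2] at h1
        exact le_antisymm h1 (hupos y ⟨le_trans hr₂pos.le hy.1.le, hy.2.le⟩)
      have hud : HasDerivAt u 0 x₃ := by
        refine (hasDerivAt_const x₃ (0:ℝ)).congr_of_eventuallyEq ?_
        filter_upwards [(isOpen_Ioo (a := r₂) (b := 1)).mem_nhds ⟨hx₃a, hx₃b⟩] with y hy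
        exact huz y hy
      have hd0 : deriv01 u x₃ = 0 := by
        rw [deriv01, derivWithin_of_mem_nhds (Icc_mem_nhds hx₃pos hx₃b)]
        exact hud.deriv
      have hGx₃ : G x₃ = 0 := by
        simp only [hGdef, hd0, phi_zero, mul_zero]
      have : G x₃ ≤ G r₂ :=
        hGanti hr₂mem.1 ⟨hx₃pos.le, hx₃b.le⟩ hx₃a.le
      rw [hGx₃] at this
      linarith
    intro x hx
    exact hu_pos_lt x ⟨hx.1, hx.2.le⟩ (hr₂1 ▸ hx.2)
  -- G < 0 on (0,1]
  have hGneg : ∀ r ∈ Set.Ioc (0:ℝ) 1, G r < 0 := by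
    have hGs : StrictAntiOn G (Set.Icc 0 1) := by
      refine strictAntiOn_of_deriv_neg (convex_Icc 0 1) hG_cont ?_
      rw [interior_Icc]
      intro x hx
      rw [(hode x hx).deriv]
      have hFx : 0 < F x := hFpos x (Ioo_subset_Icc_self hx) (hupos1 x ⟨hx.1.le, hx.2⟩)
      have : 0 < lam * x ^ (N - 1) * F x := mul_pos (mul_pos hlam (pow_pos hx.1 _)) hFx
      linarith
    intro r hr
    have := hGs ⟨le_refl 0, zero_le_one⟩ ⟨hr.1.le, hr.2⟩ hr.1
    rwa [hG0] at this
  have hu'neg : ∀ r ∈ Set.Ioo (0:ℝ) 1, deriv01 u r < 0 := by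
    intro r hr
    have h1 := hGneg r ⟨hr.1, hr.2.le⟩
    simp only [hGdef] at h1
    have h2 : (0:ℝ) < r ^ (N - 1) := pow_pos hr.1 _
    have h3 : phi p (deriv01 u r) < 0 := by nlinarith
    exact neg_of_phi h3
  have hm_pos : ∀ r ∈ Set.Ioo (0:ℝ) 1, 0 < r ^ (N - 1) * |deriv01 u r| ^ (p - 2) := by
    intro r hr
    exact mul_pos (pow_pos hr.1 _)
      (Real.rpow_pos_of_pos (abs_pos.mpr (hu'neg r hr).ne) _)
  -- w 0 = 0
  have hw_cont : ContinuousOn w (Set.Icc 0 1) := C1cont hw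
  have hNB : (𝓝[Set.Ioc (0:ℝ) 1] (0:ℝ)).NeBot := by
    refine mem_closure_iff_nhdsWithin_neBot.mp ?_
    rw [closure_Ioc (zero_ne_one (α := ℝ))]
    exact ⟨le_refl 0, zero_le_one⟩
  have hw0 : w 0 = 0 := by
    have h1 : Tendsto w (𝓝[Set.Ioc (0:ℝ) 1] (0:ℝ)) (𝓝 (w 0)) :=
      (hw_cont 0 ⟨le_refl 0, zero_le_one⟩).mono_left (nhdsWithin_mono _ Ioc_subset_Icc_self)
    have h2 : Tendsto w (𝓝[Set.Ioc (0:ℝ) 1] (0:ℝ)) (𝓝 0) := by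
      have t1 : Tendsto (fun r : ℝ => (r:ℝ) ^ (N - 1)) (𝓝[Set.Ioc (0:ℝ) 1] 0)
          (𝓝 ((0:ℝ) ^ (N - 1))) :=
        ((continuous_pow (N - 1)).tendsto 0).mono_left nhdsWithin_le_nhds
      have tu : Tendsto (fun r => deriv01 u r) (𝓝[Set.Icc (0:ℝ) 1] 0) (𝓝 0) := by
        have h := hu1.2 0 ⟨le_refl 0, zero_le_one⟩
        rw [ContinuousWithinAt, hu'0] at h
        exact h
      have habs : Tendsto (fun r => |deriv01 u r|) (𝓝[Set.Icc (0:ℝ) 1] 0) (𝓝 0) := by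
        have := tu.abs; simpa using this
      have hrpow : Tendsto (fun y : ℝ => y ^ (p - 2)) (𝓝 0) (𝓝 0) := by
        have := (Real.continuousAt_rpow_const 0 (p - 2) (Or.inr hp2.le)).tendsto
        rwa [Real.zero_rpow hp2.ne'] at this
      have t2 : Tendsto (fun r => |deriv01 u r| ^ (p - 2)) (𝓝[Set.Ioc (0:ℝ) 1] 0) (𝓝 0) :=
        hrpow.comp (habs.mono_left (nhdsWithin_mono _ Ioc_subset_Icc_self))
      have t3 : Tendsto (fun r => deriv01 v r) (𝓝[Set.Ioc (0:ℝ) 1] 0) (𝓝 0) :=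
        hv0.mono_left (nhdsWithin_mono _ (fun x hx => hx.1))
      have hq := (t1.mul t2).mul t3
      simp only [mul_zero] at hq
      refine hq.congr' ?_
      filter_upwards [self_mem_nhdsWithin] with r hr
      exact (hw_agree r hr).symm
    exact tendsto_nhds_unique h1 h2
  -- function W
  set W : ℝ → ℝ := fun r => G r * v r - u r * w r with hWdef
  have hW_cont : ContinuousOn W (Set.Icc 0 1) :=
    (hG_cont.mul hv_cont).sub ((C1cont hu1).mul hw_cont)
  have hW0 : W 0 = 0 := by simp [hWdef, hG0, hw0]
  have hW1 : W 1 = 0 := by simp [hWdef, hv1, hu10]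
  have hW' : ∀ x ∈ Set.Ioo (0:ℝ) 1, HasDerivAt W
      (lam * x ^ (N - 1) * v x * (1 / (p - 1) * F₂ x * u x - F x)) x := by
    intro x hx
    have hxc : x ∈ Set.Icc (0:ℝ) 1 := Ioo_subset_Icc_self hx
    have hux : HasDerivAt u (deriv01 u x) x := hasDerivAt_io (hu1.1 x hxc) hx
    have hvx : HasDerivAt v (deriv01 v x) x := hasDerivAt_io (hv_diff x ⟨hx.1, hx.2.le⟩) hx
    have hGx : HasDerivAt G (-(lam * x ^ (N - 1) * F x)) x := hode x hx
    have hwx := hw_eq x hx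
    have h := (hGx.mul hvx).sub (hux.mul hwx)
    refine h.congr_deriv ?_
    rw [hw_agree x ⟨hx.1, hx.2.le⟩]
    simp only [hGdef, phi]
    ring
  -- theta bounds
  have hth' : ∀ x ∈ Set.Icc (0:ℝ) 1, 1 / (p - 1) * F₂ x * u x - F x ≤ 0 := by
    intro x hx
    have h1 := hth x hx
    have h2 : 1 / (p - 1) * (F₂ x * u x) ≤ 1 / (p - 1) * ((p - 1) * F x) :=
      mul_le_mul_of_nonneg_left h1 (by positivity)
    have h3 : 1 / (p - 1) * ((p - 1) * F x) = F x := by field_simp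
    rw [h3] at h2
    nlinarith [h2]
  obtain ⟨δ, hδ, ε, hε, hstrict⟩ := hths
  -- strict region
  have hucont1 : Tendsto u (𝓝[Set.Icc (0:ℝ) 1] 1) (𝓝 0) := by
    have h := (C1cont hu1) 1 ⟨zero_le_one, le_refl 1⟩
    rwa [ContinuousWithinAt, hu10] at h
  have hmem : {x : ℝ | u x < ε} ∈ 𝓝[Set.Icc (0:ℝ) 1] (1:ℝ) := by
    have h2 : u ⁻¹' (Set.Iio ε) ∈ 𝓝[Set.Icc (0:ℝ) 1] (1:ℝ) := hucont1 (Iio_mem_nhds hε)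
    exact h2
  obtain ⟨η, hη, hball⟩ := Metric.mem_nhdsWithin_iff.mp hmem
  set r₁ : ℝ := max (1 - δ) (max (1 - η) 0) with hr₁def
  have hr₁lt1 : r₁ < 1 := by
    rw [hr₁def]
    apply max_lt (by linarith)
    apply max_lt (by linarith) one_pos
  have hr₁0 : 0 ≤ r₁ := le_max_of_le_right (le_max_right _ _)
  have hthstrict : ∀ x ∈ Set.Ioo r₁ 1, 1 / (p - 1) * F₂ x * u x - F x < 0 := by
    intro x hx
    have hx0 : 0 ≤ x := le_trans hr₁0 hx.1.le
    have hxIcc : x ∈ Set.Icc (0:ℝ) 1 := ⟨hx0, hx.2.le⟩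
    have hxIoc : x ∈ Set.Ioc (1 - δ) 1 :=
      ⟨lt_of_le_of_lt (le_max_left _ _) hx.1, hx.2.le⟩
    have hux : 0 < u x := hupos1 x ⟨hx0, hx.2⟩
    have huxε : u x < ε := by
      refine hball ⟨?_, hxIcc⟩
      rw [Metric.mem_ball, Real.dist_eq, abs_lt]
      constructor
      · have : 1 - η ≤ r₁ := le_max_of_le_right (le_max_left _ _)
        linarith [hx.1]
      · linarith [hx.2]
    have h1 := hstrict x hxIoc hux huxε
    have h2 : 1 / (p - 1) * (F₂ x * u x) < 1 / (p - 1) * ((p - 1) * F x) :=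
      mul_lt_mul_of_pos_left h1 (by positivity)
    have h3 : 1 / (p - 1) * ((p - 1) * F x) = F x := by field_simp
    rw [h3] at h2
    nlinarith [h2]
  -- construct b
  set S : Set ℝ := {r | r ∈ Set.Icc r0 1 ∧ v r = 0} with hSdef
  have hSc : IsClosed S := by
    have h1 : ContinuousOn v (Set.Icc r0 1) := hv_cont.mono (Set.Icc_subset_Icc hr0.1 le_rfl)
    have := h1.preimage_isClosed_of_isClosed isClosed_Icc (isClosed_singleton (x := (0:ℝ)))
    exact this
  have hSne : (1:ℝ) ∈ S := ⟨⟨hr0.2, le_refl 1⟩, hv1⟩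
  have hSbdd : BddBelow S := ⟨r0, fun x hx => hx.1.1⟩
  set b := sInf S with hbdef
  have hbS : b ∈ S := hSc.csInf_mem ⟨1, hSne⟩ hSbdd
  have hvb : v b = 0 := hbS.2
  have hb1 : b ≤ 1 := hbS.1.2
  have hr0b : r0 < b := by
    rcases (hbS.1.1).eq_or_lt with h | h
    · exfalso; rw [← h] at hvb; exact hvp.ne' hvb
    · exact h
  have hbpos : 0 < b := lt_of_le_of_lt hr0.1 hr0b
  have hvpos_b : ∀ x, r0 ≤ x → x < b → 0 < v x := by
    intro x hx1 hx2
    have hxI : x ∈ Set.Icc r0 1 := ⟨hx1, le_trans hx2.le hb1⟩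
    have hne : v x ≠ 0 := by
      intro h
      exact absurd (csInf_le hSbdd ⟨hxI, h⟩) (not_le.mpr hx2)
    rcases hne.lt_or_gt with h | h
    · exfalso
      have hsub : Set.Icc r0 x ⊆ Set.Icc (0:ℝ) 1 :=
        Set.Icc_subset_Icc hr0.1 hxI.2
      have hIVT := intermediate_value_Icc' hx1 (hv_cont.mono hsub)
      have h0 : (0:ℝ) ∈ Set.Icc (v x) (v r0) := ⟨h.le, hvp.le⟩
      obtain ⟨z, hz, hvz⟩ := hIVT h0
      have hzS : z ∈ S := ⟨⟨hz.1, le_trans hz.2 hxI.2⟩, hvz⟩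
      have := csInf_le hSbdd hzS
      have : b ≤ x := le_trans this hz.2
      linarith
    · exact h
  -- construct a
  set T : Set ℝ := insert 0 {r | r ∈ Set.Icc (0:ℝ) r0 ∧ v r = 0} with hTdef
  have hTc : IsClosed T := by
    refine IsClosed.union isClosed_singleton ?_
    have h1 : ContinuousOn v (Set.Icc (0:ℝ) r0) := hv_cont.mono (Set.Icc_subset_Icc le_rfl hr0.2)
    have := h1.preimage_isClosed_of_isClosed isClosed_Icc (isClosed_singleton (x := (0:ℝ)))
    exact this
  have hTne : (0:ℝ) ∈ T := Set.mem_insert 0 _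
  have hTbdd : BddAbove T := by
    refine ⟨r0, ?_⟩
    rintro x (rfl | hx)
    · exact hr0.1
    · exact hx.1.2
  set a := sSup T with hadef
  have haT : a ∈ T := hTc.csSup_mem ⟨0, hTne⟩ hTbdd
  have ha0 : 0 ≤ a := le_csSup hTbdd hTne
  have har0 : a ≤ r0 := by
    refine csSup_le ⟨0, hTne⟩ ?_
    rintro x (rfl | hx)
    · exact hr0.1
    · exact hx.1.2
  have hab : a < b := lt_of_le_of_lt har0 hr0b
  have ha1 : a < 1 := lt_of_lt_of_le hab hb1
  have haIcc : a ∈ Set.Icc (0:ℝ) 1 := ⟨ha0, ha1.le⟩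
  have hvpos_a : ∀ x, a < x → x ≤ r0 → 0 < v x := by
    intro x hx1 hx2
    have hxI : x ∈ Set.Icc (0:ℝ) 1 := ⟨le_trans ha0 hx1.le, le_trans hx2 hr0.2⟩
    have hne : v x ≠ 0 := by
      intro h
      have hxT : x ∈ T := Set.mem_insert_of_mem _ ⟨⟨hxI.1, hx2⟩, h⟩
      exact absurd (le_csSup hTbdd hxT) (not_le.mpr hx1)
    rcases hne.lt_or_gt with h | h
    · exfalso
      have hsub : Set.Icc x r0 ⊆ Set.Icc (0:ℝ) 1 := Set.Icc_subset_Icc hxI.1 hr0.2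
      have hIVT := intermediate_value_Icc hx2 (hv_cont.mono hsub)
      have h0 : (0:ℝ) ∈ Set.Icc (v x) (v r0) := ⟨h.le, hvp.le⟩
      obtain ⟨z, hz, hvz⟩ := hIVT h0
      have hzT : z ∈ T := Set.mem_insert_of_mem _ ⟨⟨le_trans hxI.1 hz.1, hz.2⟩, hvz⟩
      have := le_csSup hTbdd hzT
      have : x ≤ a := le_trans hz.1 this
      linarith
    · exact h
  have hvpos : ∀ x ∈ Set.Ioo a b, 0 < v x := by
    intro x hx
    rcases le_or_gt x r0 with h | h
    · exact hvpos_a x hx.1 h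
    · exact hvpos_b x h.le hx.2
  -- W a ≤ 0
  have hWa : W a ≤ 0 := by
    rcases ha0.eq_or_lt with h | h
    · rw [← h]; rw [hW0]
    · have hva : v a = 0 := by
        rcases haT with h1 | h1
        · exact absurd h1 h.ne'
        · exact h1.2
      have haIoo : a ∈ Set.Ioo (0:ℝ) 1 := ⟨h, ha1⟩
      have hda : HasDerivAt v (deriv01 v a) a := hasDerivAt_io (hv_diff a ⟨h, ha1.le⟩) haIoo
      have hd_nonneg : 0 ≤ deriv01 v a :=
        deriv_nonneg_right hab hda hva (fun x hx => (hvpos x hx).le)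
      have hwa : 0 ≤ w a := by
        rw [hw_agree a ⟨h, ha1.le⟩]
        exact mul_nonneg (mul_nonneg (pow_nonneg h.le _) (Real.rpow_nonneg (abs_nonneg _) _))
          hd_nonneg
      have hua : 0 < u a := hupos1 a ⟨ha0, ha1⟩
      have : W a = G a * v a - u a * w a := rfl
      rw [this, hva, mul_zero, zero_sub]
      exact neg_nonpos_of_nonneg (mul_nonneg hua.le hwa)
  -- W b ≥ 0
  have hWb : 0 ≤ W b := by
    rcases hb1.eq_or_lt with h | h
    · rw [h, hW1]
    · have hbIoo : b ∈ Set.Ioo (0:ℝ) 1 := ⟨hbpos, h⟩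
      have hdb : HasDerivAt v (deriv01 v b) b := hasDerivAt_io (hv_diff b ⟨hbpos, h.le⟩) hbIoo
      have hd_nonpos : deriv01 v b ≤ 0 :=
        deriv_nonpos_left hab hdb hvb (fun x hx => (hvpos x hx).le)
      have hwb : w b ≤ 0 := by
        rw [hw_agree b ⟨hbpos, h.le⟩]
        exact mul_nonpos_of_nonneg_of_nonpos
          (mul_nonneg (pow_nonneg hbpos.le _) (Real.rpow_nonneg (abs_nonneg _) _)) hd_nonpos
      have hub : 0 < u b := hupos1 b ⟨hbpos.le, h⟩
      have : W b = G b * v b - u b * w b := rfl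
      rw [this, hvb, mul_zero, zero_sub]
      exact neg_nonneg_of_nonpos (mul_nonpos_of_nonneg_of_nonpos hub.le hwb)
  -- W antitone on [a,b]
  have hWanti : AntitoneOn W (Set.Icc a b) := by
    have hsub : Set.Icc a b ⊆ Set.Icc (0:ℝ) 1 := Set.Icc_subset_Icc ha0 hb1
    refine antitoneOn_of_deriv_nonpos (convex_Icc a b) (hW_cont.mono hsub) ?_ ?_
    · rw [interior_Icc]
      intro x hx
      have hx1 : x ∈ Set.Ioo (0:ℝ) 1 := ⟨lt_of_le_of_lt ha0 hx.1, lt_of_lt_of_le hx.2 hb1⟩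
      exact (hW' x hx1).differentiableAt.differentiableWithinAt
    · rw [interior_Icc]
      intro x hx
      have hx1 : x ∈ Set.Ioo (0:ℝ) 1 := ⟨lt_of_le_of_lt ha0 hx.1, lt_of_lt_of_le hx.2 hb1⟩
      rw [(hW' x hx1).deriv]
      refine mul_nonpos_of_nonneg_of_nonpos ?_ (hth' x (Ioo_subset_Icc_self hx1))
      exact mul_nonneg (mul_nonneg hlam.le (pow_nonneg hx1.1.le _)) (hvpos x hx).le
  have hWzero : ∀ x ∈ Set.Icc a b, W x = 0 := by
    intro x hx
    have haM : a ∈ Set.Icc a b := ⟨le_refl a, hab.le⟩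
    have hbM : b ∈ Set.Icc a b := ⟨hab.le, le_refl b⟩
    have h1 : W x ≤ W a := hWanti haM hx hx.1
    have h2 : W b ≤ W x := hWanti hx hbM hx.2
    linarith
  -- final case analysis
  rcases hb1.eq_or_lt with hbeq | hblt
  · -- b = 1
    set r := (max a r₁ + 1) / 2 with hrdef
    have hmax1 : max a r₁ < 1 := max_lt ha1 hr₁lt1
    have hr_gt : max a r₁ < r := by rw [hrdef]; linarith
    have hr_lt1 : r < 1 := by rw [hrdef]; linarith
    have hra : a < r := lt_of_le_of_lt (le_max_left _ _) hr_gt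
    have hrr₁ : r₁ < r := lt_of_le_of_lt (le_max_right _ _) hr_gt
    have hrpos : 0 < r := lt_of_le_of_lt hr₁0 hrr₁
    have hrIoo : r ∈ Set.Ioo (0:ℝ) 1 := ⟨hrpos, hr_lt1⟩
    have hWr : HasDerivAt W 0 r := by
      refine (hasDerivAt_const r (0:ℝ)).congr_of_eventuallyEq ?_
      filter_upwards [Icc_mem_nhds hra (hbeq ▸ hr_lt1)] with y hy
      exact hWzero y hy
    have huniq : lam * r ^ (N - 1) * v r * (1 / (p - 1) * F₂ r * u r - F r) = 0 :=
      (hW' r hrIoo).unique hWr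
    have hvr : 0 < v r := hvpos r ⟨hra, hbeq ▸ hr_lt1⟩
    have hthr : 1 / (p - 1) * F₂ r * u r - F r < 0 := hthstrict r ⟨hrr₁, hr_lt1⟩
    have hprod : lam * r ^ (N - 1) * v r * (1 / (p - 1) * F₂ r * u r - F r) < 0 :=
      mul_neg_of_pos_of_neg (mul_pos (mul_pos hlam (pow_pos hrpos _)) hvr) hthr
    rw [huniq] at hprod
    exact absurd hprod (lt_irrefl 0)
  · -- b < 1
    set c := (a + b) / 2 with hcdef
    have hcI : c ∈ Set.Ioo a b := ⟨by rw [hcdef]; linarith, by rw [hcdef]; linarith⟩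
    have hu_sub : ∀ x ∈ Set.Icc a b, 0 < u x := fun x hx =>
      hupos1 x ⟨le_trans ha0 hx.1, lt_of_le_of_lt hx.2 hblt⟩
    have hsub : Set.Icc a b ⊆ Set.Icc (0:ℝ) 1 := Set.Icc_subset_Icc ha0 hb1
    set h : ℝ → ℝ := fun x => v x / u x with hhdef
    have hh_cont : ContinuousOn h (Set.Icc a b) :=
      (hv_cont.mono hsub).div ((C1cont hu1).mono hsub) (fun x hx => (hu_sub x hx).ne')
    have hh_deriv0 : ∀ x ∈ Set.Ioo a b, HasDerivAt h 0 x := by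
      intro x hx
      have hx1 : x ∈ Set.Ioo (0:ℝ) 1 := ⟨lt_of_le_of_lt ha0 hx.1, lt_trans hx.2 hblt⟩
      have hxc : x ∈ Set.Icc (0:ℝ) 1 := Ioo_subset_Icc_self hx1
      have hux : HasDerivAt u (deriv01 u x) x := hasDerivAt_io (hu1.1 x hxc) hx1
      have hvx : HasDerivAt v (deriv01 v x) x := hasDerivAt_io (hv_diff x ⟨hx1.1, hx1.2.le⟩) hx1
      have hune : u x ≠ 0 := (hu_sub x (Ioo_subset_Icc_self hx)).ne'
      have hd := hvx.div hux hune
      have hWx : W x = 0 := hWzero x (Ioo_subset_Icc_self hx)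
      have hWexp : W x = x ^ (N - 1) * |deriv01 u x| ^ (p - 2) *
          (deriv01 u x * v x - u x * deriv01 v x) := by
        have : W x = G x * v x - u x * w x := rfl
        rw [this, hw_agree x ⟨hx1.1, hx1.2.le⟩]
        simp only [hGdef, phi]
        ring
      have hmx : 0 < x ^ (N - 1) * |deriv01 u x| ^ (p - 2) := hm_pos x hx1
      have hkey : deriv01 u x * v x - u x * deriv01 v x = 0 := by
        rw [hWx] at hWexp
        exact (mul_eq_zero.mp hWexp.symm).resolve_left hmx.ne'
      have hnum : deriv01 v x * u x - v x * deriv01 u x = 0 := by linear_combination -hkey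
      have hval : (deriv01 v x * u x - v x * deriv01 u x) / u x ^ 2 = 0 := by
        rw [hnum, zero_div]
      exact hval ▸ hd
    have hconst := const_of_deriv0 hab hh_cont hh_deriv0
    have hhb : h b = 0 := by
      simp only [hhdef]
      rw [hvb, zero_div]
    have hhc : h c = 0 := by rw [hconst c (Ioo_subset_Icc_self hcI)]; exact hhb
    have hvc : v c = 0 := by
      have hune : u c ≠ 0 := (hu_sub c (Ioo_subset_Icc_self hcI)).ne'
      simp only [hhdef] at hhc
      exact (div_eq_zero_iff.mp hhc).resolve_right hune
    exact absurd hvc (hvpos c hcI).ne'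

end Key
section Key2

open Set Filter Topology

lemma key_lemma2 (p : ℝ) (hp : 2 < p) (N : ℕ) (F F₂ : ℝ → ℝ) (lam : ℝ) (hlam : 0 < lam)
    (u : ℝ → ℝ) (hu1 : C1on01 u) (hu2 : C1on01 (fun r => phi p (deriv01 u r)))
    (hode : ∀ r ∈ Set.Ioo (0:ℝ) 1,
      HasDerivAt (fun s => s ^ (N - 1) * phi p (deriv01 u s)) (-(lam * r ^ (N - 1) * F r)) r)
    (hu'0 : deriv01 u 0 = 0) (hu10 : u 1 = 0) (hnt : Nontriv01 u)
    (hupos : ∀ r ∈ Set.Icc (0:ℝ) 1, 0 ≤ u r)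
    (hF0 : ∀ r ∈ Set.Icc (0:ℝ) 1, u r = 0 → F r = 0)
    (hFpos : ∀ r ∈ Set.Icc (0:ℝ) 1, 0 < u r → 0 < F r)
    (hth : ∀ r ∈ Set.Icc (0:ℝ) 1, F₂ r * u r ≤ (p - 1) * F r)
    (hths : ∃ δ > (0:ℝ), ∃ ε > (0:ℝ), ∀ r ∈ Set.Ioc (1 - δ) 1, 0 < u r → u r < ε →
      F₂ r * u r < (p - 1) * F r)
    (v : ℝ → ℝ) (hv_cont : ContinuousOn v (Set.Icc 0 1))
    (hv_diff : ∀ r ∈ Set.Ioc (0:ℝ) 1, DifferentiableWithinAt ℝ v (Set.Icc 0 1) r)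
    (hv1 : v 1 = 0)
    (hv0 : Filter.Tendsto (fun r => deriv01 v r) (nhdsWithin 0 (Set.Ioi 0)) (nhds 0))
    (w : ℝ → ℝ) (hw : C1on01 w)
    (hw_agree : ∀ r ∈ Set.Ioc (0:ℝ) 1,
      w r = r ^ (N - 1) * |deriv01 u r| ^ (p - 2) * deriv01 v r)
    (hw_eq : ∀ r ∈ Set.Ioo (0:ℝ) 1,
      HasDerivAt w (-((1 / (p - 1)) * lam * r ^ (N - 1) * F₂ r * v r)) r)
    (r0 : ℝ) (hr0 : r0 ∈ Set.Icc (0:ℝ) 1) (hvne : v r0 ≠ 0) : False := by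
  rcases hvne.lt_or_gt with hneg | hpos
  · -- apply key with -v, -w
    refine key_lemma p hp N F F₂ lam hlam u hu1 hu2 hode hu'0 hu10 hnt hupos hF0 hFpos hth hths
      (fun x => -v x) hv_cont.neg (fun r hr => (hv_diff r hr).neg) (by simp [hv1]) ?_
      (fun x => -w x) (C1neg hw) ?_ ?_ r0 hr0 (by simpa using hneg)
    · have h1 : Tendsto (fun r => -deriv01 v r) (𝓝[>] (0:ℝ)) (𝓝 0) := by
        have := hv0.neg; simpa using this
      refine Filter.Tendsto.congr' ?_ h1
      filter_upwards [Ioo_mem_nhdsGT (zero_lt_one (α := ℝ))] with x hx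
      exact (deriv01_neg v (Ioo_subset_Icc_self hx)).symm
    · intro x hx
      show -w x = x ^ (N - 1) * |deriv01 u x| ^ (p - 2) * deriv01 (fun x => -v x) x
      rw [deriv01_neg v (Ioc_subset_Icc_self hx), hw_agree x hx]
      ring
    · intro x hx
      have h := (hw_eq x hx).neg
      refine h.congr_deriv ?_
      ring
  · exact key_lemma p hp N F F₂ lam hlam u hu1 hu2 hode hu'0 hu10 hnt hupos hF0 hFpos hth hths
      v hv_cont hv_diff hv1 hv0 w hw hw_agree hw_eq r0 hr0 hpos

end Key2

/-- non-degeneracy of the linearization along a sign-definite nontrivial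
solution under (H'): any solution `v` of the linearized problem vanishes identically. -/
theorem stmt_15 (p : ℝ) (N : ℕ) (f f₂ : ℝ → ℝ → ℝ) (f0 finf : ℝ → ℝ)
    (H : HypH' p N f f₂ f0 finf)
    (lam : ℝ) (hlam : 0 < lam) (u : ℝ → ℝ)
    (hsol : IsSolutionP p N f lam u) (hnt : Nontriv01 u) (hsd : SignDef u)
    (v : ℝ → ℝ)
    (hv_cont : ContinuousOn v (Set.Icc 0 1))
    (hv_diff : ∀ r ∈ Set.Ioc (0:ℝ) 1, DifferentiableWithinAt ℝ v (Set.Icc 0 1) r)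
    (hv1 : v 1 = 0)
    (hv0 : Filter.Tendsto (fun r => deriv01 v r) (nhdsWithin 0 (Set.Ioi 0)) (nhds 0))
    (w : ℝ → ℝ) (hw : C1on01 w)
    (hw_agree : ∀ r ∈ Set.Ioc (0:ℝ) 1,
      w r = r ^ (N - 1) * |deriv01 u r| ^ (p - 2) * deriv01 v r)
    (hw_eq : ∀ r ∈ Set.Ioo (0:ℝ) 1,
      HasDerivAt w (-((1 / (p - 1)) * lam * r ^ (N - 1) * f₂ r (u r) * v r)) r) :
    ∀ r ∈ Set.Icc (0:ℝ) 1, v r = 0 := by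
  obtain ⟨hu1, hu2, hode, hu'0, hu10⟩ := hsol
  intro r hr
  by_contra hne
  rcases hsd with hup | hun
  · refine key_lemma2 p H.hp N (fun s => f s (u s)) (fun s => f₂ s (u s)) lam hlam u hu1 hu2
      hode hu'0 hu10 hnt hup ?_ ?_ ?_ ?_ v hv_cont hv_diff hv1 hv0 w hw hw_agree hw_eq r hr hne
    · intro s hs h0
      show f s (u s) = 0
      rw [h0]
      exact H.hf_zero s hs
    · intro s hs h0
      have h1 := H.hH2 s hs (u s) h0.ne'
      show 0 < f s (u s)
      nlinarith
    · intro s hs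
      exact H.hH3p s hs (u s) (hup s hs)
    · obtain ⟨δ, hδ, ε, hε, hstr⟩ := H.hH3s
      refine ⟨δ, hδ, ε, hε, fun s hs hpos hlt => ?_⟩
      exact (hstr s hs (u s) hpos.ne' (by rw [abs_of_pos hpos]; exact hlt)).1 hpos
  · set U : ℝ → ℝ := fun x => -u x with hUdef
    have hU1 : C1on01 U := C1neg hu1
    have hUphi : C1on01 (fun s => phi p (deriv01 U s)) := by
      refine C1congr (fun s hs => ?_) (C1neg hu2)
      show phi p (deriv01 (fun x => -u x) s) = -phi p (deriv01 u s)
      rw [deriv01_neg u hs, phi_neg_arg]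
    have hUode : ∀ s ∈ Set.Ioo (0:ℝ) 1,
        HasDerivAt (fun t => t ^ (N - 1) * phi p (deriv01 U t))
          (-(lam * s ^ (N - 1) * (-(f s (u s))))) s := by
      intro s hs
      have h1 := (hode s hs).neg
      have heq : (fun t => t ^ (N - 1) * phi p (deriv01 U t)) =ᶠ[𝓝 s]
          (fun t => -(t ^ (N - 1) * phi p (deriv01 u t))) := by
        filter_upwards [Icc_mem_nhds hs.1 hs.2] with y hy
        show y ^ (N - 1) * phi p (deriv01 (fun x => -u x) y) = _
        rw [deriv01_neg u hy, phi_neg_arg]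
        ring
      have h2 := h1.congr_of_eventuallyEq heq
      refine h2.congr_deriv ?_
      ring
    refine key_lemma2 p H.hp N (fun s => -(f s (u s))) (fun s => f₂ s (u s)) lam hlam U hU1 hUphi
      hUode ?_ ?_ ?_ ?_ ?_ ?_ ?_ ?_ v hv_cont hv_diff hv1 hv0 w hw ?_ hw_eq r hr hne
    · show deriv01 (fun x => -u x) 0 = 0
      rw [deriv01_neg u ⟨le_refl 0, zero_le_one⟩, hu'0, neg_zero]
    · show -u 1 = 0
      rw [hu10, neg_zero]
    · obtain ⟨s, hs, hsne⟩ := hnt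
      refine ⟨s, hs, ?_⟩
      show -u s ≠ 0
      simpa using hsne
    · intro s hs
      have := hun s hs
      show 0 ≤ -u s
      linarith
    · intro s hs h0
      have h1 : u s = 0 := by
        have : -u s = 0 := h0
        linarith
      show -(f s (u s)) = 0
      rw [h1, H.hf_zero s hs, neg_zero]
    · intro s hs h0
      have hu : u s < 0 := by
        have : 0 < -u s := h0
        linarith
      have h1 := H.hH2 s hs (u s) hu.ne
      show 0 < -(f s (u s))
      nlinarith
    · intro s hs
      have h1 := H.hH3m s hs (u s) (hun s hs)
      show f₂ s (u s) * (-u s) ≤ (p - 1) * (-(f s (u s)))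
      nlinarith
    · obtain ⟨δ, hδ, ε, hε, hstr⟩ := H.hH3s
      refine ⟨δ, hδ, ε, hε, fun s hs hpos hlt => ?_⟩
      have hu : u s < 0 := by
        have : 0 < -u s := hpos
        linarith
      have hlt' : -u s < ε := hlt
      have h2 := (hstr s hs (u s) hu.ne (by rw [abs_of_neg hu]; exact hlt')).2 hu
      show f₂ s (u s) * (-u s) < (p - 1) * (-(f s (u s)))
      nlinarith
    · intro s hs
      rw [hw_agree s hs]
      show _ = s ^ (N - 1) * |deriv01 (fun x => -u x) s| ^ (p - 2) * deriv01 v s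
      rw [deriv01_neg u (Ioc_subset_Icc_self hs), abs_neg]
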